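/- arXiv:math/0411522 — 3 statements merged into one kernel-verified Lean document; each statement's English description precedes it below -/
import Mathlib

section
/- Let m ≥ 3 be an integer. Suppose ζ : [0,∞) → ℝ is continuous, differentiable on (0,∞), satisfies ζ(0) = 1, satisfies 1 + s ζ(s) > 0 for all s ≥ 0, and solves (1 + s ζ(s))^{m−1} s² ζ'(s) = (1 + s ζ(s))^{m−1} − 1 − (m−1) s ζ(s) for all s > 0. Then ζ'(s) > 0 for every s > 0 (in particular ζ(s) ≥ 1 for all s ≥ 0), ζ is bounded above, and ζ(s) converges as s → ∞ to a finite limit λ with λ ≥ 1. -/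
/-! Write `u = s ζ(s)` and `n = m - 1`. The ODE gives `ζ'` the sign of the Bernoulli gap
`(1 + u)^n - 1 - n u`, which is nonnegative as long as `1 + u > 0`. Hence `ζ` is nondecreasing,
so `ζ ≥ ζ(0) = 1`, and then `u > 0` makes the gap, and `ζ'`, strictly positive. For `u ≥ 0` the
gap is at most `(1 + u)^n`, so `s² ζ' ≤ 1`: thus `ζ(s) + 1/s` is nonincreasing, which bounds `ζ`,
and a bounded monotone function converges. -/

open Filter Set

lemma one_add_mul_lt_pow {u : ℝ} (hu : -1 ≤ u) (hu0 : u ≠ 0) {n : ℕ} (hn : 2 ≤ n) :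
    1 + n * u < (1 + u) ^ n := by
  have h := one_add_mul_self_lt_rpow_one_add hu hu0 (p := n) (by exact_mod_cast hn)
  rwa [Real.rpow_natCast] at h

lemma MonotoneOn.exists_tendsto_atTop_of_bddAbove {f : ℝ → ℝ} {a : ℝ}
    (hf : MonotoneOn f (Ici a)) (hbdd : BddAbove (f '' Ici a)) :
    ∃ l, Tendsto f atTop (nhds l) := by
  have hsub : Monotone fun x : Ici a => f x := fun x y hxy => hf x.2 y.2 hxy
  rw [image_eq_range] at hbdd
  exact ⟨_, tendsto_comp_val_Ici_atTop.mp (tendsto_atTop_ciSup hsub hbdd)⟩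

lemma antitoneOn_add_inv_of_sq_mul_deriv_le_one {f : ℝ → ℝ}
    (hf : ∀ s : ℝ, 0 < s → DifferentiableAt ℝ f s)
    (hf' : ∀ s : ℝ, 0 < s → s ^ 2 * deriv f s ≤ 1) :
    AntitoneOn (fun s => f s + s⁻¹) (Ioi 0) := by
  have hderiv : ∀ s : ℝ, 0 < s → HasDerivAt (fun s => f s + s⁻¹) (deriv f s - (s ^ 2)⁻¹) s :=
    fun s hs => by
      simpa [sub_eq_add_neg] using (hf s hs).hasDerivAt.fun_add (hasDerivAt_inv hs.ne')
  refine antitoneOn_of_deriv_nonpos (convex_Ioi 0)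
    (fun s hs => (hderiv s hs).continuousAt.continuousWithinAt)
    (fun s hs => (hderiv s (interior_subset hs)).differentiableAt.differentiableWithinAt)
    fun s hs => ?_
  rw [interior_Ioi] at hs
  rw [(hderiv s hs).deriv, sub_nonpos, ← one_div, le_div_iff₀' (pow_pos hs 2)]
  exact hf' s hs

section BCS

variable {n : ℕ} {s z d : ℝ}

lemma bcs_deriv_nonneg (hs : 0 < s) (hpos : 0 < 1 + s * z)
    (h : (1 + s * z) ^ n * s ^ 2 * d = (1 + s * z) ^ n - 1 - n * (s * z)) : 0 ≤ d := by
  have hgap := one_add_mul_le_pow (a := s * z) (by linarith) n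
  have hA : 0 < (1 + s * z) ^ n * s ^ 2 := by positivity
  exact nonneg_of_mul_nonneg_right (by linarith) hA

lemma bcs_deriv_pos (hn : 2 ≤ n) (hs : 0 < s) (hz : 0 < z)
    (h : (1 + s * z) ^ n * s ^ 2 * d = (1 + s * z) ^ n - 1 - n * (s * z)) : 0 < d := by
  have hu : 0 < s * z := mul_pos hs hz
  have hgap := one_add_mul_lt_pow (by linarith) hu.ne' hn
  have hA : 0 < (1 + s * z) ^ n * s ^ 2 := by positivity
  exact pos_of_mul_pos_right (by linarith) hA.le

lemma bcs_sq_mul_deriv_le_one (hs : 0 < s) (hz : 0 ≤ z)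
    (h : (1 + s * z) ^ n * s ^ 2 * d = (1 + s * z) ^ n - 1 - n * (s * z)) : s ^ 2 * d ≤ 1 := by
  have hA : 0 < (1 + s * z) ^ n := by positivity
  have hu : 0 ≤ n * (s * z) := by positivity
  refine le_of_mul_le_mul_left ?_ hA
  rw [← mul_assoc, h]
  linarith

end BCS

/-- Behaviour of the substitution `ζ` for the Burns–Calabi–Simanca ODE
in complex dimension `m ≥ 3`: if `ζ : [0,∞) → ℝ` is continuous, differentiable on `(0,∞)`,
with `ζ(0) = 1`, `1 + s ζ(s) > 0` for `s ≥ 0`, and solves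
`(1 + s ζ)^(m-1) s² ζ' = (1 + s ζ)^(m-1) - 1 - (m-1) s ζ` on `(0,∞)`,
then `ζ' > 0` on `(0,∞)` (in particular `ζ ≥ 1` on `[0,∞)`), `ζ` is bounded above,
and `ζ(s)` converges as `s → ∞` to a finite limit `λ ≥ 1`. -/
theorem statement1 (m : ℕ) (hm : 3 ≤ m) (ζ : ℝ → ℝ)
    (hcont : ContinuousOn ζ (Set.Ici (0 : ℝ)))
    (hdiff : ∀ s : ℝ, 0 < s → DifferentiableAt ℝ ζ s)
    (h0 : ζ 0 = 1)
    (hpos : ∀ s : ℝ, 0 ≤ s → 0 < 1 + s * ζ s)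
    (hODE : ∀ s : ℝ, 0 < s →
      (1 + s * ζ s) ^ (m - 1) * s ^ 2 * deriv ζ s
        = (1 + s * ζ s) ^ (m - 1) - 1 - ((m : ℝ) - 1) * (s * ζ s)) :
    (∀ s : ℝ, 0 < s → 0 < deriv ζ s) ∧
    (∀ s : ℝ, 0 ≤ s → 1 ≤ ζ s) ∧
    (∃ Cb : ℝ, ∀ s : ℝ, 0 ≤ s → ζ s ≤ Cb) ∧
    (∃ lam : ℝ, 1 ≤ lam ∧ Tendsto ζ atTop (nhds lam)) := by
  replace hODE : ∀ s : ℝ, 0 < s → (1 + s * ζ s) ^ (m - 1) * s ^ 2 * deriv ζ s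
      = (1 + s * ζ s) ^ (m - 1) - 1 - ((m - 1 : ℕ) : ℝ) * (s * ζ s) := by
    rwa [Nat.cast_pred (by omega)]
  have hmono : MonotoneOn ζ (Ici 0) := by
    refine monotoneOn_of_deriv_nonneg (convex_Ici 0) hcont ?_ ?_ <;> rw [interior_Ici]
    · exact fun s hs => (hdiff s hs).differentiableWithinAt
    · exact fun s hs => bcs_deriv_nonneg hs (hpos s hs.le) (hODE s hs)
  have hge : ∀ s : ℝ, 0 ≤ s → 1 ≤ ζ s := fun s hs => h0 ▸ hmono self_mem_Ici hs hs
  have hbdd : ∀ s : ℝ, 0 ≤ s → ζ s ≤ ζ 1 + 1 := by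
    have hanti := antitoneOn_add_inv_of_sq_mul_deriv_le_one hdiff fun s hs =>
      bcs_sq_mul_deriv_le_one hs (by linarith [hge s hs.le]) (hODE s hs)
    intro s hs
    rcases le_total s 1 with hs1 | hs1
    · linarith [hmono hs (mem_Ici.mpr zero_le_one) hs1]
    · have hdecr : ζ s + s⁻¹ ≤ ζ 1 + 1 := by
        simpa using hanti (mem_Ioi.mpr one_pos) (mem_Ioi.mpr (by linarith)) hs1
      linarith [inv_nonneg.mpr hs]
  obtain ⟨lam, hlim⟩ := hmono.exists_tendsto_atTop_of_bddAbove
    ⟨ζ 1 + 1, forall_mem_image.mpr hbdd⟩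
  refine ⟨fun s hs => bcs_deriv_pos (by omega) hs (by linarith [hge s hs.le]) (hODE s hs),
    hge, ⟨_, hbdd⟩, lam, ge_of_tendsto hlim ?_, hlim⟩
  filter_upwards [eventually_ge_atTop 0] using hge
end

section
/- Let n ≥ 2 and γ ≥ 0 be integers, let P be a homogeneous harmonic polynomial of degree γ on ℝ^n, and let ζ be a real number. Then the function f(x) = ‖x‖^{ζ−γ} P(x) satisfies, for every x ∈ ℝ^n with x ≠ 0, Δ(Δ f)(x) = (ζ − γ)(ζ − γ − 2)(ζ + γ + n − 2)(ζ + γ + n − 4) ‖x‖^{ζ−γ−4} P(x). (With n = 2m this is the computation of the indicial roots of Δ² on ℂ^m: the indicial roots associated to an eigenfunction of degree γ are γ, γ+2, 2−2m−γ and 4−2m−γ.) -/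
/-!
With `r = ‖x‖`, the product rule `Δ(r^α P) = r^α ΔP + 2 ∇(r^α)·∇P + P Δ(r^α)`, together
with `∇(r^α) = α r^(α-2) x`, Euler's identity `x·∇P = γ P` and
`Δ(r^α) = α (α + n - 2) r^(α-2)`, gives `Δ(r^α P) = α (α + 2γ + n - 2) r^(α-2) P` away from
the origin. Applying this with `α = ζ - γ` and then with `α = ζ - γ - 2` yields the four
factors.
-/

/-- The Euclidean Laplacian on `ℝ^n`: the trace of the Hessian, computed as the sum of the
second derivatives in the coordinate directions. -/
noncomputable def laplacian {n : ℕ} (f : EuclideanSpace ℝ (Fin n) → ℝ)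
    (x : EuclideanSpace ℝ (Fin n)) : ℝ :=
  ∑ i : Fin n,
    iteratedFDeriv ℝ 2 f x ![EuclideanSpace.single i 1, EuclideanSpace.single i 1]

/-- `P : ℝ^n → ℝ` is a homogeneous harmonic polynomial of degree `γ`: it is a polynomial
function, homogeneous of degree `γ` (`P (t • x) = t ^ γ * P x`), and harmonic (`Δ P = 0`). -/
def IsHomHarmonicPoly (n γ : ℕ) (P : EuclideanSpace ℝ (Fin n) → ℝ) : Prop :=
  (∃ p : MvPolynomial (Fin n) ℝ, ∀ x, P x = MvPolynomial.eval (fun i => x i) p) ∧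
  (∀ (t : ℝ) (x : EuclideanSpace ℝ (Fin n)), P (t • x) = t ^ γ * P x) ∧
  (∀ x, laplacian P x = 0)

open Filter Topology
open scoped Laplacian

theorem hasFDerivAt_norm_rpow_of_ne_zero {E : Type*} [NormedAddCommGroup E]
    [InnerProductSpace ℝ E] {x : E} (hx : x ≠ 0) (p : ℝ) :
    HasFDerivAt (fun y : E ↦ ‖y‖ ^ p) ((p * ‖x‖ ^ (p - 2)) • innerSL ℝ x) x := by
  apply HasStrictFDerivAt.hasFDerivAt
  convert! (hasStrictFDerivAt_norm_sq x).rpow_const (p := p / 2) (by simp [hx]) using 0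
  simp_rw [← Real.rpow_natCast_mul (norm_nonneg _), ← Nat.cast_smul_eq_nsmul ℝ, smul_smul]
  ring_nf

theorem contDiffAt_norm_rpow_of_ne_zero {E : Type*} [NormedAddCommGroup E]
    [InnerProductSpace ℝ E] {x : E} (hx : x ≠ 0) (p : ℝ) {k : WithTop ℕ∞} :
    ContDiffAt ℝ k (fun y : E ↦ ‖y‖ ^ p) x :=
  (contDiffAt_norm ℝ hx).rpow_const_of_ne (norm_ne_zero_iff.2 hx)

theorem contDiff_eval_mvPolynomial {ι : Type*} [Fintype ι] (p : MvPolynomial ι ℝ)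
    {k : WithTop ℕ∞} :
    ContDiff ℝ k fun x : EuclideanSpace ℝ ι => MvPolynomial.eval (fun i => x i) p := by
  induction p using MvPolynomial.induction_on with
  | C a => simpa only [MvPolynomial.eval_C] using contDiff_const
  | add p q hp hq => simpa only [map_add] using hp.add hq
  | mul_X p i hp =>
      simp only [map_mul, MvPolynomial.eval_X]
      exact hp.mul (EuclideanSpace.proj (𝕜 := ℝ) i).contDiff

section Euclidean

variable {n : ℕ} {f g : EuclideanSpace ℝ (Fin n) → ℝ} {x : EuclideanSpace ℝ (Fin n)}

theorem laplacian_eq_innerProductSpace_laplacian (f : EuclideanSpace ℝ (Fin n) → ℝ) :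
    laplacian f = Δ f := by
  rw [InnerProductSpace.laplacian_eq_iteratedFDeriv_orthonormalBasis f
    (EuclideanSpace.basisFun (Fin n) ℝ)]
  ext x
  simp [laplacian]

theorem Filter.EventuallyEq.laplacian_eq (h : f =ᶠ[𝓝 x] g) :
    laplacian f x = laplacian g x := by
  simpa only [laplacian_eq_innerProductSpace_laplacian] using
    (InnerProductSpace.laplacian_congr_nhds h).eq_of_nhds

theorem laplacian_const_mul (hf : ContDiffAt ℝ 2 f x) (c : ℝ) :
    laplacian (fun y => c * f y) x = c * laplacian f x := by
  rw [laplacian_eq_innerProductSpace_laplacian, laplacian_eq_innerProductSpace_laplacian]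
  exact InnerProductSpace.laplacian_smul c hf

noncomputable def partialDeriv (i : Fin n) (f : EuclideanSpace ℝ (Fin n) → ℝ) :
    EuclideanSpace ℝ (Fin n) → ℝ :=
  fun x => fderiv ℝ f x (EuclideanSpace.single i 1)

theorem Filter.EventuallyEq.partialDeriv_eq (h : f =ᶠ[𝓝 x] g) (i : Fin n) :
    partialDeriv i f x = partialDeriv i g x := by
  simp [partialDeriv, h.fderiv_eq]

theorem partialDeriv_add (hf : DifferentiableAt ℝ f x) (hg : DifferentiableAt ℝ g x)
    (i : Fin n) :
    partialDeriv i (fun y => f y + g y) x = partialDeriv i f x + partialDeriv i g x := by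
  simp [partialDeriv, fderiv_fun_add hf hg]

theorem partialDeriv_const_mul (hf : DifferentiableAt ℝ f x) (c : ℝ) (i : Fin n) :
    partialDeriv i (fun y => c * f y) x = c * partialDeriv i f x := by
  simp [partialDeriv, fderiv_const_mul hf]

theorem partialDeriv_mul (hf : DifferentiableAt ℝ f x) (hg : DifferentiableAt ℝ g x)
    (i : Fin n) :
    partialDeriv i (fun y => f y * g y) x
      = f x * partialDeriv i g x + g x * partialDeriv i f x := by
  simp [partialDeriv, fderiv_fun_mul hf hg]

theorem partialDeriv_coord (i : Fin n) (x : EuclideanSpace ℝ (Fin n)) :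
    partialDeriv i (fun y => y i) x = 1 := by
  have h : HasFDerivAt (fun y : EuclideanSpace ℝ (Fin n) => y i)
      (EuclideanSpace.proj (𝕜 := ℝ) i) x :=
    (EuclideanSpace.proj (𝕜 := ℝ) i).hasFDerivAt
  simp [partialDeriv, h.fderiv]

theorem partialDeriv_norm_rpow (hx : x ≠ 0) (p : ℝ) (i : Fin n) :
    partialDeriv i (fun y => ‖y‖ ^ p) x = p * ‖x‖ ^ (p - 2) * x i := by
  simp [partialDeriv, (hasFDerivAt_norm_rpow_of_ne_zero hx p).fderiv,
    EuclideanSpace.inner_single_right]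

theorem ContDiffAt.eventually_differentiableAt (hf : ContDiffAt ℝ 2 f x) :
    ∀ᶠ y in 𝓝 x, DifferentiableAt ℝ f y :=
  (hf.eventually (by simp)).mono fun _ hy => hy.differentiableAt two_ne_zero

theorem ContDiffAt.differentiableAt_partialDeriv (hf : ContDiffAt ℝ 2 f x) (i : Fin n) :
    DifferentiableAt ℝ (partialDeriv i f) x :=
  ((hf.fderiv_right (m := 1) le_rfl).differentiableAt one_ne_zero).clm_apply
    (differentiableAt_const _)

theorem laplacian_eq_sum_partialDeriv (hf : ContDiffAt ℝ 2 f x) :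
    laplacian f x = ∑ i, partialDeriv i (partialDeriv i f) x := by
  have hdiff : DifferentiableAt ℝ (fderiv ℝ f) x :=
    (hf.fderiv_right (m := 1) le_rfl).differentiableAt one_ne_zero
  refine Finset.sum_congr rfl fun i _ => ?_
  unfold partialDeriv
  rw [iteratedFDeriv_two_apply, fderiv_clm_apply hdiff (differentiableAt_const _)]
  simp

theorem laplacian_mul (hf : ContDiffAt ℝ 2 f x) (hg : ContDiffAt ℝ 2 g x) :
    laplacian (fun y => f y * g y) x = f x * laplacian g x
      + 2 * ∑ i, partialDeriv i f x * partialDeriv i g x + g x * laplacian f x := by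
  rw [laplacian_eq_sum_partialDeriv (hf.mul hg), laplacian_eq_sum_partialDeriv hf,
    laplacian_eq_sum_partialDeriv hg, Finset.mul_sum, Finset.mul_sum, Finset.mul_sum,
    ← Finset.sum_add_distrib, ← Finset.sum_add_distrib]
  refine Finset.sum_congr rfl fun i _ => ?_
  have hprod : partialDeriv i (fun y => f y * g y) =ᶠ[𝓝 x]
      fun y => f y * partialDeriv i g y + g y * partialDeriv i f y :=
    (hf.eventually_differentiableAt.and hg.eventually_differentiableAt).mono
      fun y hy => partialDeriv_mul hy.1 hy.2 i
  have hf' := hf.differentiableAt two_ne_zero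
  have hg' := hg.differentiableAt two_ne_zero
  have hfi := hf.differentiableAt_partialDeriv i
  have hgi := hg.differentiableAt_partialDeriv i
  rw [hprod.partialDeriv_eq, partialDeriv_add (hf'.fun_mul hgi) (hg'.fun_mul hfi),
    partialDeriv_mul hf' hgi, partialDeriv_mul hg' hfi]
  ring

theorem laplacian_norm_rpow (hx : x ≠ 0) (p : ℝ) :
    laplacian (fun y => ‖y‖ ^ p) x = p * (p + n - 2) * ‖x‖ ^ (p - 2) := by
  have hgrad : ∀ i, partialDeriv i (fun y => ‖y‖ ^ p) =ᶠ[𝓝 x]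
      fun y => p * ‖y‖ ^ (p - 2) * y i :=
    fun i => (eventually_ne_nhds hx).mono fun y hy => partialDeriv_norm_rpow hy p i
  have hrad : DifferentiableAt ℝ (fun y => ‖y‖ ^ (p - 2)) x :=
    (hasFDerivAt_norm_rpow_of_ne_zero hx _).differentiableAt
  have hcoord : ∀ i, DifferentiableAt ℝ (fun y : EuclideanSpace ℝ (Fin n) => y i) x :=
    fun i => (EuclideanSpace.proj (𝕜 := ℝ) i).differentiableAt
  have hsecond : ∀ i, partialDeriv i (partialDeriv i fun y => ‖y‖ ^ p) x
      = p * (p - 2) * ‖x‖ ^ (p - 4) * (x i * x i) + p * ‖x‖ ^ (p - 2) := by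
    intro i
    rw [(hgrad i).partialDeriv_eq, partialDeriv_mul (hrad.const_mul p) (hcoord i),
      partialDeriv_const_mul hrad, partialDeriv_norm_rpow hx, partialDeriv_coord]
    ring_nf
  have hpow : ‖x‖ ^ (p - 4) * ‖x‖ ^ 2 = ‖x‖ ^ (p - 2) := by
    rw [← Real.rpow_natCast, ← Real.rpow_add (norm_pos_iff.2 hx)]
    congr 1
    push_cast
    ring
  have hnorm : ∑ i, x i * x i = ‖x‖ ^ 2 := by
    rw [EuclideanSpace.real_norm_sq_eq]; simp only [sq]
  rw [laplacian_eq_sum_partialDeriv (contDiffAt_norm_rpow_of_ne_zero hx p),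
    Finset.sum_congr rfl fun i _ => hsecond i, Finset.sum_add_distrib, ← Finset.mul_sum,
    hnorm, Finset.sum_const, Finset.card_univ, Fintype.card_fin, nsmul_eq_mul]
  linear_combination (p * (p - 2)) * hpow

theorem sum_coord_mul_partialDeriv_of_homogeneous {P : EuclideanSpace ℝ (Fin n) → ℝ} {γ : ℕ}
    (hP : DifferentiableAt ℝ P x) (hhom : ∀ t : ℝ, P (t • x) = t ^ γ * P x) :
    ∑ i, x i * partialDeriv i P x = γ * P x := by
  have hline : HasDerivAt (fun t : ℝ => t • x) x 1 := by
    simpa using (hasDerivAt_id (1 : ℝ)).smul_const x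
  have hray : HasDerivAt (fun t : ℝ => P (t • x)) (fderiv ℝ P x x) 1 :=
    hP.hasFDerivAt.comp_hasDerivAt_of_eq 1 hline (one_smul ℝ x).symm
  have hpow : HasDerivAt (fun t : ℝ => P (t • x)) (γ * P x) 1 := by
    simpa [hhom] using (hasDerivAt_pow γ (1 : ℝ)).mul_const (P x)
  calc ∑ i, x i * partialDeriv i P x
      = fderiv ℝ P x (∑ i, x i • EuclideanSpace.single i 1) := by
        simp [partialDeriv, map_sum, smul_eq_mul]
    _ = fderiv ℝ P x x := by
        congr 1
        simpa using (EuclideanSpace.basisFun (Fin n) ℝ).sum_repr x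
    _ = γ * P x := hray.unique hpow

theorem laplacian_norm_rpow_mul_harmonic {P : EuclideanSpace ℝ (Fin n) → ℝ} {γ : ℕ}
    (hx : x ≠ 0) (hP : ContDiffAt ℝ 2 P x) (hhom : ∀ t : ℝ, P (t • x) = t ^ γ * P x)
    (hharm : laplacian P x = 0) (p : ℝ) :
    laplacian (fun y => ‖y‖ ^ p * P y) x
      = p * (p + 2 * γ + n - 2) * (‖x‖ ^ (p - 2) * P x) := by
  have hgrad : ∑ i, partialDeriv i (fun y => ‖y‖ ^ p) x * partialDeriv i P x
      = p * ‖x‖ ^ (p - 2) * (γ * P x) := by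
    simp only [partialDeriv_norm_rpow hx, mul_assoc, ← Finset.mul_sum]
    rw [sum_coord_mul_partialDeriv_of_homogeneous (hP.differentiableAt two_ne_zero) hhom]
  rw [laplacian_mul (contDiffAt_norm_rpow_of_ne_zero hx p) hP, hharm, hgrad, laplacian_norm_rpow hx]
  ring

end Euclidean

theorem statement4_general (n γ : ℕ) (P : EuclideanSpace ℝ (Fin n) → ℝ)
    (hP : IsHomHarmonicPoly n γ P) (ζ : ℝ) :
    ∀ x : EuclideanSpace ℝ (Fin n), x ≠ 0 →
      laplacian (laplacian (fun y => ‖y‖ ^ (ζ - (γ : ℝ)) * P y)) x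
        = (ζ - (γ : ℝ)) * (ζ - (γ : ℝ) - 2) * (ζ + (γ : ℝ) + (n : ℝ) - 2) *
            (ζ + (γ : ℝ) + (n : ℝ) - 4) * ‖x‖ ^ (ζ - (γ : ℝ) - 4) * P x := by
  intro x hx
  obtain ⟨⟨p, hp⟩, hhom, hharm⟩ := hP
  have hsmooth : ContDiff ℝ 2 P := by
    rw [funext hp]
    exact contDiff_eval_mvPolynomial p
  have hΔ : ∀ {y : EuclideanSpace ℝ (Fin n)}, y ≠ 0 → ∀ q : ℝ,
      laplacian (fun y => ‖y‖ ^ q * P y) y = q * (q + 2 * γ + n - 2) * (‖y‖ ^ (q - 2) * P y) :=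
    fun hy q => laplacian_norm_rpow_mul_harmonic hy hsmooth.contDiffAt (hhom · _) (hharm _) q
  have hfirst : laplacian (fun y => ‖y‖ ^ (ζ - γ) * P y) =ᶠ[𝓝 x]
      fun y => (ζ - γ) * (ζ - γ + 2 * γ + n - 2) * (‖y‖ ^ (ζ - γ - 2) * P y) :=
    (eventually_ne_nhds hx).mono fun y hy => hΔ hy _
  have hsecond : ContDiffAt ℝ 2 (fun y => ‖y‖ ^ (ζ - γ - 2) * P y) x :=
    (contDiffAt_norm_rpow_of_ne_zero hx _).mul hsmooth.contDiffAt
  rw [hfirst.laplacian_eq, laplacian_const_mul hsecond, hΔ hx,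
    show ζ - γ - 2 - 2 = ζ - γ - 4 by ring]
  ring

/-- Indicial-root computation: for a homogeneous harmonic polynomial `P`
of degree `γ` on `ℝ^n` (`n ≥ 2`) and `ζ ∈ ℝ`, the function `f(x) = ‖x‖^(ζ-γ) P(x)`
satisfies, for every `x ≠ 0`,
`Δ²f(x) = (ζ-γ)(ζ-γ-2)(ζ+γ+n-2)(ζ+γ+n-4) ‖x‖^(ζ-γ-4) P(x)`.
(With `n = 2m` this computes the indicial roots `γ, γ+2, 2-2m-γ, 4-2m-γ` of `Δ²` on `ℂ^m`.) -/
theorem statement4 (n γ : ℕ) (hn : 2 ≤ n) (P : EuclideanSpace ℝ (Fin n) → ℝ)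
    (hP : IsHomHarmonicPoly n γ P) (ζ : ℝ) :
    ∀ x : EuclideanSpace ℝ (Fin n), x ≠ 0 →
      laplacian (laplacian (fun y => ‖y‖ ^ (ζ - (γ : ℝ)) * P y)) x
        = (ζ - (γ : ℝ)) * (ζ - (γ : ℝ) - 2) * (ζ + (γ : ℝ) + (n : ℝ) - 2) *
            (ζ + (γ : ℝ) + (n : ℝ) - 4) * ‖x‖ ^ (ζ - (γ : ℝ) - 4) * P x :=
  statement4_general n γ P hP ζ
end

section
/- Let N ≥ 1 be an integer, let δ' ∈ ℝ, let 0 < r₀ and let 0 < r̄ < r₀/2. Given a continuous function ψ on the closed annulus {z ∈ ℝ^N : r̄ ≤ ‖z‖ ≤ r₀}, define E_{r̄}(ψ) on the punctured closed ball {z : 0 < ‖z‖ ≤ r₀} by: E_{r̄}(ψ)(z) = ψ(z) when r̄ ≤ ‖z‖ ≤ r₀; E_{r̄}(ψ)(z) = ((2‖z‖ − r̄)/r̄)·ψ(r̄ z/‖z‖) when r̄/2 ≤ ‖z‖ ≤ r̄; and E_{r̄}(ψ)(z) = 0 when 0 < ‖z‖ ≤ r̄/2. Then E_{r̄}(ψ)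 is continuous on {z : 0 < ‖z‖ ≤ r₀}, and sup_{0<‖z‖≤r₀} ‖z‖^{−δ'} |E_{r̄}(ψ)(z)| ≤ 2^{|δ'|} · sup_{r̄≤‖z‖≤r₀} ‖z‖^{−δ'} |ψ(z)|; in particular the constant 2^{|δ'|} depends only on δ' and not on r̄. -/
/-!
Away from the origin, `E_r̄ ψ = χ(‖z‖) · ψ(ρ z)`, where `ρ z = (max r̄ ‖z‖ / ‖z‖) • z` is the
continuous radial retraction of the punctured ball onto the annulus and `χ` is the piecewise
linear ramp equal to `0` on `[0, r̄/2]` and to `1` on `[r̄, ∞)`; this gives continuity at once.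
For the weighted bound, `0 ≤ χ ≤ 1`, and where `χ(‖z‖) ≠ 0` we have
`‖ρ z‖ / 2 ≤ ‖z‖ ≤ ‖ρ z‖`, so the weights at `z` and at `ρ z` differ by a factor at most `2^|δ'|`.
-/

open Set

/-- The extension operator `E_r̄`: it agrees with `ψ` on the annulus `r̄ ≤ ‖z‖ ≤ r₀`,
equals `((2‖z‖ - r̄)/r̄) ψ(r̄ z/‖z‖)` on `r̄/2 ≤ ‖z‖ ≤ r̄`, and vanishes for `‖z‖ ≤ r̄/2`. -/
noncomputable def extOp (N : ℕ) (rb : ℝ) (ψ : EuclideanSpace ℝ (Fin N) → ℝ)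
    (z : EuclideanSpace ℝ (Fin N)) : ℝ :=
  if rb ≤ ‖z‖ then ψ z
  else if rb / 2 ≤ ‖z‖ then (2 * ‖z‖ - rb) / rb * ψ ((rb / ‖z‖) • z)
  else 0

lemma isCompact_setOf_le_norm_le {E : Type*} [NormedAddCommGroup E] [ProperSpace E] (r R : ℝ) :
    IsCompact {z : E | r ≤ ‖z‖ ∧ ‖z‖ ≤ R} :=
  (isCompact_closedBall (0 : E) R).of_isClosed_subset
    ((isClosed_le continuous_const continuous_norm).inter
      (isClosed_le continuous_norm continuous_const))
    fun _ hz => mem_closedBall_zero_iff.mpr hz.2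

section RadialRetraction

variable {E : Type*} [NormedAddCommGroup E] [NormedSpace ℝ E]

noncomputable def radialRetraction (r : ℝ) (z : E) : E := (max r ‖z‖ / ‖z‖) • z

lemma norm_radialRetraction (r : ℝ) {z : E} (hz : 0 < ‖z‖) :
    ‖radialRetraction r z‖ = max r ‖z‖ := by
  rw [radialRetraction, norm_smul, Real.norm_of_nonneg (by positivity),
    div_mul_cancel₀ _ hz.ne']

lemma radialRetraction_of_le {r : ℝ} {z : E} (h : r ≤ ‖z‖) (hz : 0 < ‖z‖) :
    radialRetraction r z = z := by
  rw [radialRetraction, max_eq_right h, div_self hz.ne', one_smul]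

lemma radialRetraction_of_ge {r : ℝ} {z : E} (h : ‖z‖ ≤ r) :
    radialRetraction r z = (r / ‖z‖) • z := by
  rw [radialRetraction, max_eq_left h]

lemma continuousOn_radialRetraction (r : ℝ) :
    ContinuousOn (radialRetraction (E := E) r) {z | 0 < ‖z‖} :=
  ((continuous_const.max continuous_norm).continuousOn.div continuous_norm.continuousOn
    fun _ hz => hz.ne').smul continuousOn_id

lemma mapsTo_radialRetraction {r R : ℝ} (hrR : r ≤ R) :
    MapsTo (radialRetraction (E := E) r) {z | 0 < ‖z‖ ∧ ‖z‖ ≤ R} {z | r ≤ ‖z‖ ∧ ‖z‖ ≤ R} :=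
  fun _ ⟨hz, hzR⟩ => by
    rw [mem_ofPred_eq, norm_radialRetraction r hz]
    exact ⟨le_max_left _ _, max_le hrR hzR⟩

end RadialRetraction

noncomputable def rampCutoff (r t : ℝ) : ℝ := min 1 (max 0 ((2 * t - r) / r))

lemma continuous_rampCutoff (r : ℝ) : Continuous (rampCutoff r) :=
  continuous_const.min <| continuous_const.max <|
    ((continuous_const.mul continuous_id).sub continuous_const).div_const r

lemma abs_rampCutoff_le_one (r t : ℝ) : |rampCutoff r t| ≤ 1 :=
  abs_le.mpr ⟨by unfold rampCutoff; grind, min_le_left _ _⟩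

lemma rampCutoff_of_lt {r t : ℝ} (hr : 0 < r) (ht : t < r / 2) : rampCutoff r t = 0 := by
  have : (2 * t - r) / r ≤ 0 := div_nonpos_of_nonpos_of_nonneg (by linarith) hr.le
  rw [rampCutoff, max_eq_left this, min_eq_right zero_le_one]

lemma rampCutoff_of_le_of_le {r t : ℝ} (hr : 0 < r) (h₁ : r / 2 ≤ t) (h₂ : t ≤ r) :
    rampCutoff r t = (2 * t - r) / r := by
  rw [rampCutoff, max_eq_right (div_nonneg (by linarith) hr.le),
    min_eq_right ((div_le_one hr).mpr (by linarith))]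

lemma rampCutoff_of_ge {r t : ℝ} (hr : 0 < r) (h : r ≤ t) : rampCutoff r t = 1 := by
  have : 1 ≤ (2 * t - r) / r := (le_div_iff₀ hr).mpr (by linarith)
  rw [rampCutoff, max_eq_right (zero_le_one.trans this), min_eq_left this]

lemma rpow_neg_le_two_rpow_abs_mul {s t : ℝ} (δ : ℝ) (hs : 0 < s) (h₁ : s / 2 ≤ t)
    (h₂ : t ≤ s) : t ^ (-δ) ≤ 2 ^ |δ| * s ^ (-δ) := by
  have ht : 0 < t := by linarith
  rcases le_total 0 δ with hδ | hδ
  · calc t ^ (-δ) ≤ (s / 2) ^ (-δ) := Real.rpow_le_rpow_of_nonpos (by positivity) h₁ (by linarith)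
      _ = 2 ^ |δ| * s ^ (-δ) := by
        rw [Real.div_rpow hs.le zero_le_two, Real.rpow_neg zero_le_two, abs_of_nonneg hδ,
          div_inv_eq_mul, mul_comm]
  · calc t ^ (-δ) ≤ s ^ (-δ) := Real.rpow_le_rpow ht.le h₂ (by linarith)
      _ ≤ 2 ^ |δ| * s ^ (-δ) :=
        le_mul_of_one_le_left (by positivity) (Real.one_le_rpow one_le_two (abs_nonneg δ))

section ExtOp

variable {N : ℕ} {rb : ℝ} {ψ : EuclideanSpace ℝ (Fin N) → ℝ}

lemma extOp_eq_rampCutoff_mul (hrb : 0 < rb) (z : EuclideanSpace ℝ (Fin N)) :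
    extOp N rb ψ z = rampCutoff rb ‖z‖ * ψ (radialRetraction rb z) := by
  unfold extOp
  split_ifs with h₁ h₂
  · rw [rampCutoff_of_ge hrb h₁, radialRetraction_of_le h₁ (hrb.trans_le h₁), one_mul]
  · have h₁ : ‖z‖ ≤ rb := (not_le.mp h₁).le
    rw [rampCutoff_of_le_of_le hrb h₂ h₁, radialRetraction_of_ge h₁]
  · rw [rampCutoff_of_lt hrb (not_le.mp h₂), zero_mul]

lemma continuousOn_extOp {r₀ : ℝ} (hrb : 0 < rb) (hrbr₀ : rb ≤ r₀)
    (hψ : ContinuousOn ψ {z | rb ≤ ‖z‖ ∧ ‖z‖ ≤ r₀}) :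
    ContinuousOn (extOp N rb ψ) {z | 0 < ‖z‖ ∧ ‖z‖ ≤ r₀} := by
  refine ContinuousOn.congr ?_ fun z _ => extOp_eq_rampCutoff_mul hrb z
  exact (continuous_rampCutoff rb).comp_continuousOn continuous_norm.continuousOn |>.mul <|
    hψ.comp ((continuousOn_radialRetraction rb).mono fun _ hz => hz.1)
      (mapsTo_radialRetraction hrbr₀)

lemma rpow_neg_mul_abs_extOp_le (δ : ℝ) (hrb : 0 < rb) {z : EuclideanSpace ℝ (Fin N)}
    (hz : 0 < ‖z‖) :
    ‖z‖ ^ (-δ) * |extOp N rb ψ z| ≤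
      2 ^ |δ| * (‖radialRetraction rb z‖ ^ (-δ) * |ψ (radialRetraction rb z)|) := by
  rw [extOp_eq_rampCutoff_mul hrb, abs_mul, ← mul_assoc]
  rcases lt_or_ge ‖z‖ (rb / 2) with hsmall | hlarge
  · rw [rampCutoff_of_lt hrb hsmall, abs_zero, mul_zero, zero_mul]
    positivity
  have hweight : ‖z‖ ^ (-δ) ≤ 2 ^ |δ| * ‖radialRetraction rb z‖ ^ (-δ) := by
    rw [norm_radialRetraction rb hz]
    exact rpow_neg_le_two_rpow_abs_mul δ (hrb.trans_le (le_max_left _ _))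
      ((div_le_iff₀ two_pos).mpr (max_le (by linarith) (by linarith)))
      (le_max_right _ _)
  calc ‖z‖ ^ (-δ) * |rampCutoff rb ‖z‖| * |ψ (radialRetraction rb z)|
      ≤ ‖z‖ ^ (-δ) * |ψ (radialRetraction rb z)| := by
        gcongr
        exact mul_le_of_le_one_right (by positivity) (abs_rampCutoff_le_one _ _)
    _ ≤ _ := by rw [← mul_assoc]; gcongr

end ExtOp

theorem statement11_general (N : ℕ) (δ' r₀ rb : ℝ)
    (hrb : 0 < rb) (hrbr₀ : rb < r₀ / 2)
    (ψ : EuclideanSpace ℝ (Fin N) → ℝ)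
    (hψ : ContinuousOn ψ {z : EuclideanSpace ℝ (Fin N) | rb ≤ ‖z‖ ∧ ‖z‖ ≤ r₀}) :
    ContinuousOn (extOp N rb ψ) {z : EuclideanSpace ℝ (Fin N) | 0 < ‖z‖ ∧ ‖z‖ ≤ r₀} ∧
    ∀ z : EuclideanSpace ℝ (Fin N), 0 < ‖z‖ → ‖z‖ ≤ r₀ →
      ‖z‖ ^ (-δ') * |extOp N rb ψ z| ≤
        (2 : ℝ) ^ |δ'| *
          sSup ((fun w : EuclideanSpace ℝ (Fin N) => ‖w‖ ^ (-δ') * |ψ w|) ''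
            {w : EuclideanSpace ℝ (Fin N) | rb ≤ ‖w‖ ∧ ‖w‖ ≤ r₀}) := by
  have hrbr₀' : rb ≤ r₀ := by linarith
  refine ⟨continuousOn_extOp hrb hrbr₀' hψ, fun z hz hzr₀ => ?_⟩
  have hbdd : BddAbove ((fun w : EuclideanSpace ℝ (Fin N) => ‖w‖ ^ (-δ') * |ψ w|) ''
      {w | rb ≤ ‖w‖ ∧ ‖w‖ ≤ r₀}) :=
    (isCompact_setOf_le_norm_le rb r₀).bddAbove_image <|
      (continuousOn_id.norm.rpow_const fun w hw => .inl (hrb.trans_le hw.1).ne').mul hψ.abs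
  calc ‖z‖ ^ (-δ') * |extOp N rb ψ z|
      ≤ 2 ^ |δ'| * (‖radialRetraction rb z‖ ^ (-δ') * |ψ (radialRetraction rb z)|) :=
        rpow_neg_mul_abs_extOp_le δ' hrb hz
    _ ≤ _ := by
        gcongr
        exact le_csSup hbdd (mem_image_of_mem _ (mapsTo_radialRetraction hrbr₀' ⟨hz, hzr₀⟩))

/-- The extension operator `E_r̄` maps functions continuous on the
annulus `{r̄ ≤ ‖z‖ ≤ r₀}` to functions continuous on the punctured ball `{0 < ‖z‖ ≤ r₀}`,
and its norm between the weighted `C⁰` spaces with weight `δ'` is bounded by `2^|δ'|`,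
a constant depending only on `δ'` and not on `r̄ ∈ (0, r₀/2)`. -/
theorem statement11 (N : ℕ) (hN : 1 ≤ N) (δ' r₀ rb : ℝ)
    (hr₀ : 0 < r₀) (hrb : 0 < rb) (hrbr₀ : rb < r₀ / 2)
    (ψ : EuclideanSpace ℝ (Fin N) → ℝ)
    (hψ : ContinuousOn ψ {z : EuclideanSpace ℝ (Fin N) | rb ≤ ‖z‖ ∧ ‖z‖ ≤ r₀}) :
    ContinuousOn (extOp N rb ψ) {z : EuclideanSpace ℝ (Fin N) | 0 < ‖z‖ ∧ ‖z‖ ≤ r₀} ∧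
    ∀ z : EuclideanSpace ℝ (Fin N), 0 < ‖z‖ → ‖z‖ ≤ r₀ →
      ‖z‖ ^ (-δ') * |extOp N rb ψ z| ≤
        (2 : ℝ) ^ |δ'| *
          sSup ((fun w : EuclideanSpace ℝ (Fin N) => ‖w‖ ^ (-δ') * |ψ w|) ''
            {w : EuclideanSpace ℝ (Fin N) | rb ≤ ‖w‖ ∧ ‖w‖ ≤ r₀}) :=
  statement11_general N δ' r₀ rb hrb hrbr₀ ψ hψ
end
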